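/- arXiv:2210.16973 — 4 statements merged into one kernel-verified Lean document; each statement's English description precedes it below -/
import Mathlib

section
/- Let G be a semigroup generated by a finite set U acting on ℝ^d by linear maps, and let G_n denote the set of products of at most n generators (including the empty product, the identity). Suppose a ∈ ℝ^d is such that the orbit Ga is not contained in any proper affine subspace of ℝ^d. Then G_d · a (the image of a under the ball of radius d in the Cayley graph) is not contained in any proper affine subspace of ℝ^d. -/
/-- The ball of radius `n` in the Cayley graph of the semigroup generated by `U`:
all products of at most `n` elements of `U` (including the empty product). -/
def ballProd {V : Type*} [Monoid V] (U : Finset V) (n : ℕ) : Set V :=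
  {g | ∃ l : List V, (∀ u ∈ l, u ∈ U) ∧ l.length ≤ n ∧ l.prod = g}

/-!
Let `W n` be the span of the differences `g a - a` with `g ∈ G_n`, so that the affine span of
`G_n a` is `a + W n`. Since `(u g) a - a = u (g a - a) + (u a - a)`, the chain satisfies
`W (n + 1) = W 1 ⊔ ⨆ u ∈ U, u (W n)`; hence it is constant as soon as two consecutive terms agree.
An increasing chain of subspaces of `ℝ^d` cannot grow strictly `d + 1` times in a row, so this
happens by step `d`, and `W d` already contains every `W n`.
-/

theorem apply_eq_of_le_of_apply_succ_eq {α : Type*} {W : ℕ → α} {F : α → α}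
    (hF : ∀ n, W (n + 1) = F (W n)) {n : ℕ} (hn : W (n + 1) = W n) {m : ℕ} (hm : n ≤ m) :
    W m = W n := by
  induction m, hm using Nat.le_induction with
  | base => rfl
  | succ m _ ih => rw [hF, ih, ← hF, hn]

namespace Submodule

variable {K V : Type*} [DivisionRing K] [AddCommGroup V] [Module K V] [FiniteDimensional K V]

theorem exists_le_finrank_apply_succ_eq {W : ℕ → Submodule K V} (hW : Monotone W) :
    ∃ n ≤ Module.finrank K V, W (n + 1) = W n := by
  by_contra! hne
  have hrank : ∀ n ≤ Module.finrank K V + 1, n ≤ Module.finrank K (W n) := by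
    intro n hn
    induction n with
    | zero => exact Nat.zero_le _
    | succ n ih =>
      have hlt : W n < W (n + 1) :=
        (hW n.le_succ).lt_of_ne (hne n (by omega)).symm
      have := finrank_lt_finrank_of_lt hlt
      omega
  have := (W (Module.finrank K V + 1)).finrank_le
  have := hrank _ le_rfl
  omega

theorem le_apply_finrank_of_apply_succ_eq {W : ℕ → Submodule K V}
    {F : Submodule K V → Submodule K V} (hW : Monotone W) (hF : ∀ n, W (n + 1) = F (W n)) (m : ℕ) :
    W m ≤ W (Module.finrank K V) := by
  obtain ⟨n, hn, hrep⟩ := exists_le_finrank_apply_succ_eq hW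
  rcases le_total m (Module.finrank K V) with hm | hm
  · exact hW hm
  · rw [apply_eq_of_le_of_apply_succ_eq hF hrep (hn.trans hm),
      apply_eq_of_le_of_apply_succ_eq hF hrep hn]

end Submodule

section ballProd

variable {M : Type*} [Monoid M] {U : Finset M}

theorem ballProd_mono : Monotone (ballProd U) := by
  rintro m n hmn g ⟨l, hl, hlen, rfl⟩
  exact ⟨l, hl, hlen.trans hmn, rfl⟩

theorem one_mem_ballProd (n : ℕ) : (1 : M) ∈ ballProd U n :=
  ⟨[], by simp, by simp, rfl⟩

theorem mem_ballProd_succ {g : M} {n : ℕ} :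
    g ∈ ballProd U (n + 1) ↔ g = 1 ∨ ∃ u ∈ U, ∃ g' ∈ ballProd U n, g = u * g' := by
  constructor
  · rintro ⟨_ | ⟨u, l⟩, hl, hlen, rfl⟩
    · exact Or.inl rfl
    · simp only [List.mem_cons, forall_eq_or_imp, List.length_cons] at hl hlen
      exact Or.inr ⟨u, hl.1, l.prod, ⟨l, hl.2, by omega, rfl⟩, List.prod_cons⟩
  · rintro (rfl | ⟨u, hu, g', ⟨l, hl, hlen, rfl⟩, rfl⟩)
    · exact one_mem_ballProd _
    · refine ⟨u :: l, ?_, by simpa using hlen, List.prod_cons⟩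
      simpa only [List.mem_cons, forall_eq_or_imp] using ⟨hu, hl⟩

theorem mul_mem_ballProd_succ {u g : M} {n : ℕ} (hu : u ∈ U) (hg : g ∈ ballProd U n) :
    u * g ∈ ballProd U (n + 1) :=
  mem_ballProd_succ.2 (Or.inr ⟨u, hu, g, hg, rfl⟩)

end ballProd

section orbitDiffSpan

variable {K V : Type*} [Ring K] [AddCommGroup V] [Module K V]
  (U : Finset (Module.End K V)) (a : V)

def orbitDiffSpan (n : ℕ) : Submodule K V :=
  Submodule.span K {x | ∃ g ∈ ballProd U n, g a - a = x}

variable {U a}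

theorem sub_mem_orbitDiffSpan {g : Module.End K V} {n : ℕ} (hg : g ∈ ballProd U n) :
    g a - a ∈ orbitDiffSpan U a n :=
  Submodule.subset_span ⟨g, hg, rfl⟩

theorem orbitDiffSpan_le_iff {n : ℕ} {W : Submodule K V} :
    orbitDiffSpan U a n ≤ W ↔ ∀ g ∈ ballProd U n, g a - a ∈ W :=
  Submodule.span_le.trans
    ⟨fun h g hg => h ⟨g, hg, rfl⟩, by rintro h _ ⟨g, hg, rfl⟩; exact h g hg⟩

theorem orbitDiffSpan_mono : Monotone (orbitDiffSpan U a) := fun _ _ hmn =>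
  orbitDiffSpan_le_iff.2 fun _ hg => sub_mem_orbitDiffSpan (ballProd_mono hmn hg)

theorem orbitDiffSpan_succ (n : ℕ) :
    orbitDiffSpan U a (n + 1) = orbitDiffSpan U a 1 ⊔ ⨆ u ∈ U, (orbitDiffSpan U a n).map u := by
  have hcomp (u g : Module.End K V) : (u * g) a - a = u (g a - a) + (u a - a) := by
    rw [Module.End.mul_apply, map_sub]; abel
  have hgen {u : Module.End K V} (hu : u ∈ U) (m : ℕ) : u ∈ ballProd U (m + 1) := by
    simpa using mul_mem_ballProd_succ hu (one_mem_ballProd m)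
  apply le_antisymm
  · rw [orbitDiffSpan_le_iff]
    intro g hg
    rcases mem_ballProd_succ.1 hg with rfl | ⟨u, hu, g', hg', rfl⟩
    · simp
    · rw [hcomp]
      refine add_mem (Submodule.mem_sup_right ?_) (Submodule.mem_sup_left ?_)
      · exact Submodule.mem_iSup_of_mem u <| Submodule.mem_iSup_of_mem hu <|
          Submodule.mem_map_of_mem (sub_mem_orbitDiffSpan hg')
      · exact sub_mem_orbitDiffSpan (hgen hu 0)
  · refine sup_le (orbitDiffSpan_mono (by omega)) (iSup₂_le fun u hu => ?_)
    rw [Submodule.map_le_iff_le_comap, orbitDiffSpan_le_iff]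
    intro g hg
    have hug := sub_mem_orbitDiffSpan (a := a) (mul_mem_ballProd_succ hu hg)
    rw [hcomp] at hug
    simpa using sub_mem hug (sub_mem_orbitDiffSpan (hgen hu n))

theorem forall_ballProd_sub_mem_iff {n : ℕ} {W : Submodule K V} {v : V} :
    (∀ g ∈ ballProd U n, g a - v ∈ W) ↔ a - v ∈ W ∧ orbitDiffSpan U a n ≤ W := by
  rw [orbitDiffSpan_le_iff]
  constructor
  · intro h
    have hav : a - v ∈ W := by simpa using h 1 (one_mem_ballProd n)
    exact ⟨hav, fun g hg => by simpa using sub_mem (h g hg) hav⟩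
  · rintro ⟨hav, h⟩ g hg
    simpa using add_mem (h g hg) hav

end orbitDiffSpan

/-- If the full orbit `G a` is not contained in any proper affine subspace of `ℝ^d`,
then already `G_d · a` is not contained in any proper affine subspace. -/
theorem stmt0 (d : ℕ) (U : Finset (Module.End ℝ (Fin d → ℝ))) (a : Fin d → ℝ)
    (h : ∀ (W : Submodule ℝ (Fin d → ℝ)) (v : Fin d → ℝ),
      (∀ n : ℕ, ∀ g ∈ ballProd U n, g a - v ∈ W) → W = ⊤) :
    ∀ (W : Submodule ℝ (Fin d → ℝ)) (v : Fin d → ℝ),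
      (∀ g ∈ ballProd U d, g a - v ∈ W) → W = ⊤ := by
  intro W v hW
  obtain ⟨hav, hdW⟩ := forall_ballProd_sub_mem_iff.1 hW
  refine h W v fun n => forall_ballProd_sub_mem_iff.2 ⟨hav, le_trans ?_ hdW⟩
  simpa using Submodule.le_apply_finrank_of_apply_succ_eq (W := orbitDiffSpan U a)
    (F := fun S => orbitDiffSpan U a 1 ⊔ ⨆ u ∈ U, S.map u) orbitDiffSpan_mono orbitDiffSpan_succ n
end

section
/- Let T₀ : ℤ^d → ℤ^r be a ℤ-linear map. Then there exist an integer d' ≤ d, a surjective ℤ-linear map R : ℤ^d → ℤ^{d'}, an injective ℤ-linear map T : ℤ^{d'} → ℤ^r with T₀ = T ∘ R, and a constant Q > 0 such that for all positive integers q and all w ∈ ℤ^{d'} with gcd(w, q) = 1 (gcd of all coordinates of w together with q equals 1), the gcd of all coordinates of Tw together with q is at most Q. -/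
/-!
Factor `T₀` through its image, a free `ℤ`-module of rank `d' ≤ d`. The injective factor `T`,
with matrix `A`, has a left quasi-inverse: `S = adj(Aᵀ A) Aᵀ` satisfies `S T = N • id` with
`N = det(Aᵀ A) ≠ 0`. A common divisor of the coordinates of `T w` and of `q` then divides
the coordinates of `S (T w) = N w` and `N q`, hence `N gcd(w, q) = N`; so `Q = |N|` works.
-/

open Finset Matrix Module Function

theorem LinearMap.exists_eq_comp_surjective_injective {R M N : Type*} [CommRing R] [IsDomain R]
    [IsPrincipalIdealRing R] [AddCommGroup M] [Module R M] [Module.Finite R M] [AddCommGroup N]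
    [Module R N] [IsTorsionFree R N] (f : M →ₗ[R] N) :
    ∃ (k : ℕ) (_ : k ≤ finrank R M) (g : M →ₗ[R] (Fin k → R)) (h : (Fin k → R) →ₗ[R] N),
      Surjective g ∧ Injective h ∧ f = h ∘ₗ g := by
  let e := (Module.finBasis R (LinearMap.range f)).equivFun
  refine ⟨_, f.finrank_range_le, e.toLinearMap ∘ₗ f.rangeRestrict,
    (LinearMap.range f).subtype ∘ₗ e.symm.toLinearMap,
    e.surjective.comp f.surjective_rangeRestrict, Subtype.val_injective.comp e.symm.injective, ?_⟩
  ext x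
  simp

theorem Matrix.exists_mul_eq_smul_one_of_injective_mulVec {m n R : Type*} [Fintype m] [Fintype n]
    [DecidableEq n] [CommRing R] [PartialOrder R] [StarRing R] [StarOrderedRing R] [IsDomain R]
    {A : Matrix m n R} (hA : Injective A.mulVec) :
    ∃ (B : Matrix n m R) (N : R), N ≠ 0 ∧ B * A = N • 1 := by
  have hdet : (Aᴴ * A).det ≠ 0 := fun h => by
    obtain ⟨v, hv, hAv⟩ := exists_mulVec_eq_zero_iff.mpr h
    rw [conjTranspose_mul_self_mulVec_eq_zero, ← mulVec_zero A] at hAv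
    exact hv (hA hAv)
  exact ⟨(Aᴴ * A).adjugate * Aᴴ, _, hdet, by rw [Matrix.mul_assoc, adjugate_mul]⟩

theorem LinearMap.exists_comp_eq_smul_id_of_injective {m n R : Type*} [Fintype m] [Fintype n]
    [CommRing R] [PartialOrder R] [StarRing R] [StarOrderedRing R] [IsDomain R]
    {T : (n → R) →ₗ[R] (m → R)} (hT : Injective T) :
    ∃ (S : (m → R) →ₗ[R] (n → R)) (N : R), N ≠ 0 ∧ S ∘ₗ T = N • LinearMap.id := by
  classical
  have hA : Injective (toMatrix' T).mulVec := by
    rwa [← toLin'_toMatrix' T, toLin'_apply', coe_mulVecLin] at hT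
  obtain ⟨B, N, hN, hBA⟩ := exists_mul_eq_smul_one_of_injective_mulVec hA
  refine ⟨toLin' B, N, hN, ?_⟩
  rw [← toLin'_toMatrix' T, ← toLin'_mul, hBA, map_smul, toLin'_one]

theorem Finset.univ_gcd_dvd_univ_gcd_map {ι κ R : Type*} [Fintype ι] [Fintype κ] [CommRing R]
    [IsDomain R] [NormalizedGCDMonoid R] (S : (ι → R) →ₗ[R] (κ → R)) (v : ι → R) :
    univ.gcd v ∣ univ.gcd (S v) := by
  classical
  refine Finset.dvd_gcd fun j _ => ?_
  rw [S.pi_apply_eq_sum_univ v, Finset.sum_apply]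
  exact Finset.dvd_sum fun i _ => (Finset.gcd_dvd (mem_univ i)).mul_right _

theorem Int.gcd_univ_gcd_dvd_of_comp_eq_smul_id {ι κ : Type*} [Fintype ι] [Fintype κ]
    {T : (ι → ℤ) →ₗ[ℤ] (κ → ℤ)} {S : (κ → ℤ) →ₗ[ℤ] (ι → ℤ)} {N : ℤ}
    (hST : S ∘ₗ T = N • LinearMap.id) (w : ι → ℤ) (q : ℤ) :
    Int.gcd (univ.gcd (T w)) q ∣ N.natAbs * Int.gcd (univ.gcd w) q := by
  set g := Int.gcd (univ.gcd (T w)) q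
  have hgTw : (g : ℤ) ∣ N.natAbs * univ.gcd w := by
    have hSTw : S (T w) = N • w := LinearMap.congr_fun hST w
    have : (g : ℤ) ∣ _ := (Int.gcd_dvd_left _ q).trans (Finset.univ_gcd_dvd_univ_gcd_map S (T w))
    simpa only [hSTw, Pi.smul_def, smul_eq_mul, Finset.gcd_mul_left, ← Int.abs_eq_normalize,
      Int.abs_eq_natAbs] using this
  have hgq : (g : ℤ) ∣ N.natAbs * q := (Int.gcd_dvd_right _ _).mul_left _
  have := Int.dvd_coe_gcd hgTw hgq
  rwa [Int.gcd_mul_left, Int.natAbs_natCast, Int.natCast_dvd_natCast] at this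

/-- GCD bound lemma: any `ℤ`-linear map `T₀ : ℤ^d → ℤ^r` factors as `T₀ = T ∘ R` with
`R` surjective onto `ℤ^{d'}` (`d' ≤ d`) and `T` injective, such that for some `Q > 0`,
for all `q > 0` and all `w ∈ ℤ^{d'}` with `gcd(w, q) = 1` we have `gcd(T w, q) ≤ Q`. -/
theorem stmt3 (d r : ℕ) (T₀ : (Fin d → ℤ) →ₗ[ℤ] (Fin r → ℤ)) :
    ∃ (d' : ℕ) (_ : d' ≤ d) (R : (Fin d → ℤ) →ₗ[ℤ] (Fin d' → ℤ))
      (T : (Fin d' → ℤ) →ₗ[ℤ] (Fin r → ℤ)) (Q : ℕ),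
      Function.Surjective R ∧ Function.Injective T ∧ T₀ = T.comp R ∧ 0 < Q ∧
      ∀ q : ℕ, 0 < q → ∀ w : Fin d' → ℤ,
        Int.gcd (Finset.univ.gcd w) (q : ℤ) = 1 →
        Int.gcd (Finset.univ.gcd (T w)) (q : ℤ) ≤ Q := by
  obtain ⟨d', hd', R, T, hR, hT, hfac⟩ := T₀.exists_eq_comp_surjective_injective
  rw [finrank_fin_fun] at hd'
  obtain ⟨S, N, hN, hST⟩ := LinearMap.exists_comp_eq_smul_id_of_injective hT
  refine ⟨d', hd', R, T, N.natAbs, hR, hT, hfac, Int.natAbs_pos.mpr hN, fun q _ w hw => ?_⟩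
  have hdvd := Int.gcd_univ_gcd_dvd_of_comp_eq_smul_id hST w q
  rw [hw, mul_one] at hdvd
  exact Nat.le_of_dvd (Int.natAbs_pos.mpr hN) hdvd
end

section
/- Let μ be a probability measure on a group G ≤ SL_d(ℤ) satisfying: there exist λ > 0 and C > 0 such that for every x ∈ 𝕋^d, every 0 < t < 1/2 and every a ∈ ℤ^d \ {0}, if |Fourier coefficient of μ^{*n} * δ_x at a| ≥ t and n ≥ C log(‖a‖/t), then there exist q ∈ ℤ_{>0} with q < (‖a‖/t)^C and x' ∈ (1/q)ℤ^d/ℤ^d with d(x, x') ≤ e^{−λn}. Then: (i) for every rational x = v/q ∈ 𝕋^d with v ∈ ℤ^d, gcd(v, q) = 1, and every a ∈ ℤ^d \ {0}, limsup_{n→∞} |\widehat{μ^{*n} * δ_x}(a)| ≤ 2‖a‖ q^{−1/C}; (ii) for every irrational y ∈ 𝕋^d and every a ∈ ℤ^d \ {0}, limsup_{n→∞} |\widehat{μ^{*n} * δ_y}(a)| = 0. -/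
open MeasureTheory Filter

noncomputable section

instance {d : ℕ} : MeasurableSpace (Matrix.SpecialLinearGroup (Fin d) ℤ) := ⊤

/-- `e(x) = exp(2πix)` on the circle `𝕋 = ℝ/ℤ`. -/
def eT (x : AddCircle (1 : ℝ)) : ℂ := AddCircle.toCircle x

/-- The action of an element of `SL_d(ℤ)` on the torus `𝕋^d`. -/
def slAct {d : ℕ} (g : Matrix.SpecialLinearGroup (Fin d) ℤ)
    (x : Fin d → AddCircle (1 : ℝ)) : Fin d → AddCircle (1 : ℝ) :=
  fun i => ∑ j, (g : Matrix (Fin d) (Fin d) ℤ) i j • x j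

/-- The Fourier coefficient of a measure `ν` on `𝕋^d` at the frequency `a ∈ ℤ^d`. -/
def fourierCoef {d : ℕ} (ν : Measure (Fin d → AddCircle (1 : ℝ)))
    (a : Fin d → ℤ) : ℂ :=
  ∫ u, eT (∑ j, a j • u j) ∂ν

/-- `μ^{*n} * δ_x` : the distribution of `g_1 ⋯ g_n • x` when `g_1, …, g_n` are
i.i.d. with law `μ` on `G ≤ SL_d(ℤ)`. -/
def walkMeasure {d : ℕ} (G : Subgroup (Matrix.SpecialLinearGroup (Fin d) ℤ))
    (μ : Measure G) (n : ℕ) (x : Fin d → AddCircle (1 : ℝ)) :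
    Measure (Fin d → AddCircle (1 : ℝ)) :=
  Measure.map
    (fun gs : Fin n → G =>
      slAct (((List.ofFn gs).prod : G) : Matrix.SpecialLinearGroup (Fin d) ℤ) x)
    (Measure.pi fun _ => μ)

/-- Sup norm of an integer vector. -/
def znorm {d : ℕ} (a : Fin d → ℤ) : ℝ := ‖fun i => ((a i : ℝ))‖

/-!
If the Fourier coefficient of `μ^{*n} * δ_x` at `a` is at least `t` for some large `n`, the
hypothesis puts `x` within `e^{-λn}` of a torsion point of order `< (‖a‖/t)^C`. There are only
finitely many such points, so unless `x` is one of them it keeps a positive distance from all of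
them, and the coefficient is eventually `< t`. An irrational point is never a torsion point, which
gives (ii); the point `v/q` in lowest terms has order exactly `q`, which for
`t = ‖a‖ q^{-1/C}`, i.e. `(‖a‖/t)^C = q`, gives (i).
-/

instance {d : ℕ} : Countable (Matrix.SpecialLinearGroup (Fin d) ℤ) := by
  unfold Matrix.SpecialLinearGroup Matrix; infer_instance

instance {d : ℕ} : MeasurableSingletonClass (Matrix.SpecialLinearGroup (Fin d) ℤ) :=
  ⟨fun _ => trivial⟩

instance {d n : ℕ} (G : Subgroup (Matrix.SpecialLinearGroup (Fin d) ℤ))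
    (μ : Measure G) [IsProbabilityMeasure μ] (x : Fin d → AddCircle (1 : ℝ)) :
    IsProbabilityMeasure (walkMeasure G μ n x) :=
  Measure.isProbabilityMeasure_map (measurable_of_countable _).aemeasurable

lemma norm_fourierCoef_le_one {d : ℕ} (ν : Measure (Fin d → AddCircle (1 : ℝ)))
    [IsProbabilityMeasure ν] (a : Fin d → ℤ) : ‖fourierCoef ν a‖ ≤ 1 := by
  simpa [fourierCoef, eT] using norm_integral_le_of_norm_le_const (μ := ν)
    (Eventually.of_forall fun u => (Circle.norm_coe (AddCircle.toCircle _)).le)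

lemma znorm_pos {d : ℕ} {a : Fin d → ℤ} (ha : a ≠ 0) : 0 < znorm a := by
  refine norm_pos_iff.mpr fun h => ha (funext fun i => ?_)
  simpa using congrFun h i

lemma AddCircle.exists_rat_eq_of_nsmul_eq_zero {u : AddCircle (1 : ℝ)} {q : ℕ} (hq : 0 < q)
    (hu : q • u = 0) : ∃ w : ℚ, u = ((w : ℝ) : AddCircle (1 : ℝ)) := by
  obtain ⟨m, -, rfl⟩ := (AddCircle.nsmul_eq_zero_iff hq).mp hu
  exact ⟨m / q, by push_cast; ring_nf⟩

lemma dvd_of_nsmul_div_eq_zero {d : ℕ} {q q' : ℕ} {v : Fin d → ℤ} (hq : 0 < q)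
    (hv : Int.gcd (Finset.univ.gcd v) (q : ℤ) = 1)
    (h : q' • (fun i => (((v i : ℝ) / q : ℝ) : AddCircle (1 : ℝ))) = 0) : q ∣ q' := by
  have hdvd : ∀ i, (q : ℤ) ∣ q' * v i := by
    intro i
    have hi := congrFun h i
    rw [Pi.smul_apply, ← AddCircle.coe_nsmul, Pi.zero_apply] at hi
    obtain ⟨k, hk⟩ := (AddCircle.coe_eq_zero_iff (1 : ℝ)).mp hi
    refine ⟨k, ?_⟩
    rw [zsmul_eq_mul, mul_one, nsmul_eq_mul, mul_div_assoc', eq_div_iff (by positivity)] at hk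
    rw [mul_comm (q : ℤ)]
    exact_mod_cast hk.symm
  have : (q : ℤ) ∣ q' * Finset.univ.gcd v := by
    simpa [Finset.gcd_mul_left, Int.normalize_of_nonneg] using Finset.dvd_gcd fun i _ => hdvd i
  exact_mod_cast Int.dvd_of_dvd_mul_left_of_gcd_one this (by rwa [Int.gcd_comm])

def torsionBelow (d : ℕ) (K : ℝ) : Set (Fin d → AddCircle (1 : ℝ)) :=
  {x | ∃ q : ℕ, 0 < q ∧ (q : ℝ) < K ∧ q • x = 0}

lemma torsionBelow_finite (d : ℕ) (K : ℝ) : (torsionBelow d K).Finite := by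
  refine ((Set.finite_Ioo 0 ⌈K⌉₊).biUnion fun q hq =>
    (Set.Finite.pi (t := fun _ : Fin d => {u : AddCircle (1 : ℝ) | q • u = 0})
      fun _ => AddCircle.finite_torsion 1 hq.1)).subset ?_
  rintro x ⟨q, hq, hqK, hx⟩
  exact Set.mem_biUnion ⟨hq, Nat.lt_ceil.mpr hqK⟩ fun i _ => congrFun hx i

lemma div_mem_torsionBelow {d q : ℕ} {K : ℝ} (hq : 0 < q) (hqK : (q : ℝ) < K)
    (v : Fin d → ℤ) : (fun i => (((v i : ℝ) / q : ℝ) : AddCircle (1 : ℝ))) ∈ torsionBelow d K := by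
  refine ⟨q, hq, hqK, funext fun i => ?_⟩
  rw [Pi.smul_apply, ← AddCircle.coe_nsmul, nsmul_eq_mul, mul_div_cancel₀ _ (by positivity)]
  exact (AddCircle.coe_eq_zero_iff 1).mpr ⟨v i, by simp⟩

lemma div_notMem_torsionBelow {d q : ℕ} {v : Fin d → ℤ} (hq : 0 < q)
    (hv : Int.gcd (Finset.univ.gcd v) (q : ℤ) = 1) :
    (fun i => (((v i : ℝ) / q : ℝ) : AddCircle (1 : ℝ))) ∉ torsionBelow d q := by
  rintro ⟨q', hq', hq'q, hvq'⟩
  exact hq'q.not_ge (mod_cast Nat.le_of_dvd hq' (dvd_of_nsmul_div_eq_zero hq hv hvq'))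

lemma notMem_torsionBelow_of_irrational {d : ℕ} {y : Fin d → AddCircle (1 : ℝ)}
    (hy : ¬ ∃ w : Fin d → ℚ, y = fun i => (((w i : ℚ) : ℝ) : AddCircle (1 : ℝ))) (K : ℝ) :
    y ∉ torsionBelow d K := by
  rintro ⟨q, hq, -, hqy⟩
  choose w hw using fun i => AddCircle.exists_rat_eq_of_nsmul_eq_zero hq (congrFun hqy i)
  exact hy ⟨w, funext hw⟩

def HasEffectiveEquidistribution {d : ℕ} (G : Subgroup (Matrix.SpecialLinearGroup (Fin d) ℤ))
    (μ : Measure G) (lam C : ℝ) : Prop :=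
  ∀ (x : Fin d → AddCircle (1 : ℝ)) (t : ℝ), 0 < t → t < 1 / 2 →
    ∀ a : Fin d → ℤ, a ≠ 0 → ∀ n : ℕ,
      t ≤ ‖fourierCoef (walkMeasure G μ n x) a‖ →
      C * Real.log (znorm a / t) ≤ n →
      ∃ (q : ℕ) (v : Fin d → ℤ), 0 < q ∧ (q : ℝ) < (znorm a / t) ^ C ∧
        dist x (fun i => (((v i : ℝ) / q : ℝ) : AddCircle (1 : ℝ)))
          ≤ Real.exp (-lam * n)

section Walk

variable {d : ℕ} {G : Subgroup (Matrix.SpecialLinearGroup (Fin d) ℤ)} {μ : Measure G}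
  {lam C : ℝ}

lemma eventually_norm_fourierCoef_lt (hμ : HasEffectiveEquidistribution G μ lam C)
    (hlam : 0 < lam) {x : Fin d → AddCircle (1 : ℝ)} {a : Fin d → ℤ} (ha : a ≠ 0) {t : ℝ}
    (ht : 0 < t) (ht' : t < 1 / 2) (hx : x ∉ torsionBelow d ((znorm a / t) ^ C)) :
    ∀ᶠ n : ℕ in atTop, ‖fourierCoef (walkMeasure G μ n x) a‖ < t := by
  obtain ⟨δ, hδ, hball⟩ := Metric.mem_nhds_iff.mp
    ((torsionBelow_finite d _).isClosed.isOpen_compl.mem_nhds hx)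
  have hexp : Tendsto (fun n : ℕ => Real.exp (-lam * n)) atTop (nhds 0) :=
    Real.tendsto_exp_atBot.comp (tendsto_natCast_atTop_atTop.const_mul_atTop_of_neg (by linarith))
  filter_upwards [hexp.eventually_lt_const hδ,
    tendsto_natCast_atTop_atTop.eventually_ge_atTop (C * Real.log (znorm a / t))]
    with n hn hlog
  by_contra! hlarge
  obtain ⟨q, v, hq, hqK, hdist⟩ := hμ x t ht ht' a ha n hlarge hlog
  exact hball (Metric.mem_ball'.mpr (hdist.trans_lt hn)) (div_mem_torsionBelow hq hqK v)

lemma limsup_norm_fourierCoef_le (hμ : HasEffectiveEquidistribution G μ lam C)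
    (hlam : 0 < lam) {x : Fin d → AddCircle (1 : ℝ)} {a : Fin d → ℤ} (ha : a ≠ 0) {t : ℝ}
    (ht : 0 < t) (ht' : t < 1 / 2) (hx : x ∉ torsionBelow d ((znorm a / t) ^ C)) :
    limsup (fun n : ℕ => ‖fourierCoef (walkMeasure G μ n x) a‖) atTop ≤ t :=
  limsup_le_of_le (isCoboundedUnder_le_of_le atTop fun _ => norm_nonneg _)
    ((eventually_norm_fourierCoef_lt hμ hlam ha ht ht' hx).mono fun _ => le_of_lt)

lemma limsup_norm_fourierCoef_le_one [IsProbabilityMeasure μ] (x : Fin d → AddCircle (1 : ℝ))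
    (a : Fin d → ℤ) :
    limsup (fun n : ℕ => ‖fourierCoef (walkMeasure G μ n x) a‖) atTop ≤ 1 :=
  limsup_le_of_le (isCoboundedUnder_le_of_le atTop fun _ => norm_nonneg _)
    (Eventually.of_forall fun _ => norm_fourierCoef_le_one _ _)

lemma limsup_norm_fourierCoef_div_le [IsProbabilityMeasure μ]
    (hμ : HasEffectiveEquidistribution G μ lam C) (hlam : 0 < lam) (hC : 0 < C) {q : ℕ}
    {v : Fin d → ℤ} (hq : 0 < q) (hv : Int.gcd (Finset.univ.gcd v) (q : ℤ) = 1)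
    {a : Fin d → ℤ} (ha : a ≠ 0) :
    limsup (fun n : ℕ => ‖fourierCoef
        (walkMeasure G μ n (fun i => (((v i : ℝ) / q : ℝ) : AddCircle (1 : ℝ)))) a‖) atTop
      ≤ 2 * znorm a * (q : ℝ) ^ (-(1 : ℝ) / C) := by
  set t := znorm a * (q : ℝ) ^ (-(1 : ℝ) / C) with ht
  have ht0 : 0 < t := mul_pos (znorm_pos ha) (by positivity)
  rw [mul_assoc, ← ht]
  rcases lt_or_ge t (1 / 2) with ht' | ht'
  · have hK : (znorm a / t) ^ C = q := by
      rw [ht, div_mul_cancel_left₀ (znorm_pos ha).ne', neg_div, one_div, Real.rpow_neg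
        (Nat.cast_nonneg q), inv_inv, Real.rpow_inv_rpow (Nat.cast_nonneg q) hC.ne']
    have hx : (fun i => (((v i : ℝ) / q : ℝ) : AddCircle (1 : ℝ))) ∉
        torsionBelow d ((znorm a / t) ^ C) := by
      rw [hK]
      exact div_notMem_torsionBelow hq hv
    linarith [limsup_norm_fourierCoef_le hμ hlam ha ht0 ht' hx]
  · exact (limsup_norm_fourierCoef_le_one _ a).trans (by linarith)

lemma limsup_norm_fourierCoef_eq_zero (hμ : HasEffectiveEquidistribution G μ lam C)
    (hlam : 0 < lam) {y : Fin d → AddCircle (1 : ℝ)} (hy : ∀ K, y ∉ torsionBelow d K)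
    {a : Fin d → ℤ} (ha : a ≠ 0) :
    limsup (fun n : ℕ => ‖fourierCoef (walkMeasure G μ n y) a‖) atTop = 0 := by
  have hle : ∀ t, 0 < t → t < 1 / 2 →
      limsup (fun n : ℕ => ‖fourierCoef (walkMeasure G μ n y) a‖) atTop ≤ t :=
    fun t ht ht' => limsup_norm_fourierCoef_le hμ hlam ha ht ht' (hy _)
  have hbdd := isBoundedUnder_of_eventually_le <|
    (eventually_norm_fourierCoef_lt hμ hlam ha (t := 1 / 4) (by norm_num) (by norm_num)
      (hy _)).mono fun _ => le_of_lt
  refine le_antisymm (le_of_forall_gt_imp_ge_of_dense fun c hc => ?_)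
    (le_limsup_of_frequently_le (Frequently.of_forall fun _ => norm_nonneg _) hbdd)
  exact (hle (min c (1 / 4)) (lt_min hc (by norm_num)) (by norm_num)).trans (min_le_left _ _)

end Walk

theorem stmt10_general (d : ℕ)
    (G : Subgroup (Matrix.SpecialLinearGroup (Fin d) ℤ))
    (μ : Measure G) [IsProbabilityMeasure μ]
    (lam C : ℝ) (hlam : 0 < lam) (hC : 0 < C)
    (hyp : ∀ (x : Fin d → AddCircle (1 : ℝ)) (t : ℝ), 0 < t → t < 1 / 2 →
      ∀ a : Fin d → ℤ, a ≠ 0 → ∀ n : ℕ,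
        t ≤ ‖fourierCoef (walkMeasure G μ n x) a‖ →
        C * Real.log (znorm a / t) ≤ n →
        ∃ (q : ℕ) (v : Fin d → ℤ), 0 < q ∧ (q : ℝ) < (znorm a / t) ^ C ∧
          dist x (fun i => (((v i : ℝ) / q : ℝ) : AddCircle (1 : ℝ)))
            ≤ Real.exp (-lam * n)) :
    (∀ (q : ℕ) (v : Fin d → ℤ), 0 < q →
        Int.gcd (Finset.univ.gcd v) (q : ℤ) = 1 →
        ∀ a : Fin d → ℤ, a ≠ 0 →
        limsup (fun n : ℕ => ‖fourierCoef
            (walkMeasure G μ n (fun i => (((v i : ℝ) / q : ℝ) : AddCircle (1 : ℝ)))) a‖)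
          atTop ≤ 2 * znorm a * (q : ℝ) ^ (-(1 : ℝ) / C)) ∧
    (∀ y : Fin d → AddCircle (1 : ℝ),
        (¬ ∃ w : Fin d → ℚ, y = fun i => (((w i : ℚ) : ℝ) : AddCircle (1 : ℝ))) →
        ∀ a : Fin d → ℤ, a ≠ 0 →
        limsup (fun n : ℕ =>
            ‖fourierCoef (walkMeasure G μ n y) a‖) atTop = 0) :=
  ⟨fun _ _ hq hv _ ha => limsup_norm_fourierCoef_div_le hyp hlam hC hq hv ha,
    fun _ hy _ ha =>
      limsup_norm_fourierCoef_eq_zero hyp hlam (notMem_torsionBelow_of_irrational hy) ha⟩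

/-- Assuming the He–de Saxcé theorem for the random walk given by `μ` on
`G ≤ SL_d(ℤ)`: (i) for a rational point `v/q` in lowest terms, the Fourier
coefficients of `μ^{*n} * δ_{v/q}` at `a ≠ 0` have `limsup ≤ 2‖a‖ q^{−1/C}`;
(ii) for an irrational point they tend to `0`. -/
theorem stmt10 (d : ℕ) (hd : 0 < d)
    (G : Subgroup (Matrix.SpecialLinearGroup (Fin d) ℤ))
    (μ : Measure G) [IsProbabilityMeasure μ]
    (lam C : ℝ) (hlam : 0 < lam) (hC : 0 < C)
    (hyp : ∀ (x : Fin d → AddCircle (1 : ℝ)) (t : ℝ), 0 < t → t < 1 / 2 →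
      ∀ a : Fin d → ℤ, a ≠ 0 → ∀ n : ℕ,
        t ≤ ‖fourierCoef (walkMeasure G μ n x) a‖ →
        C * Real.log (znorm a / t) ≤ n →
        ∃ (q : ℕ) (v : Fin d → ℤ), 0 < q ∧ (q : ℝ) < (znorm a / t) ^ C ∧
          dist x (fun i => (((v i : ℝ) / q : ℝ) : AddCircle (1 : ℝ)))
            ≤ Real.exp (-lam * n)) :
    (∀ (q : ℕ) (v : Fin d → ℤ), 0 < q →
        Int.gcd (Finset.univ.gcd v) (q : ℤ) = 1 →
        ∀ a : Fin d → ℤ, a ≠ 0 →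
        limsup (fun n : ℕ => ‖fourierCoef
            (walkMeasure G μ n (fun i => (((v i : ℝ) / q : ℝ) : AddCircle (1 : ℝ)))) a‖)
          atTop ≤ 2 * znorm a * (q : ℝ) ^ (-(1 : ℝ) / C)) ∧
    (∀ y : Fin d → AddCircle (1 : ℝ),
        (¬ ∃ w : Fin d → ℚ, y = fun i => (((w i : ℚ) : ℝ) : AddCircle (1 : ℝ))) →
        ∀ a : Fin d → ℤ, a ≠ 0 →
        limsup (fun n : ℕ =>
            ‖fourierCoef (walkMeasure G μ n y) a‖) atTop = 0) :=
  stmt10_general d G μ lam C hlam hC hyp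
end
end

section
/- Let G₁ ≤ SL_{d₁}(ℤ) and G₂ ≤ SL_{d₂}(ℤ) with d₁, d₂ ≥ 2 act irreducibly on ℝ^{d₁} and ℝ^{d₂} respectively. Let a = (a₁, a₂) ∈ ℝ^{d₁} × ℝ^{d₂} with a₁ ≠ 0 and a₂ ≠ 0. If W ≤ ℝ^{d₁} × ℝ^{d₂} is a linear subspace such that (g₁, g₂)·a ∈ W + a for all (g₁, g₂) ∈ G₁ × G₂, then W = ℝ^{d₁} × ℝ^{d₂}. -/
/-- The action of `SL_d(ℤ)` on `ℝ^d`. -/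
noncomputable def slActR {d : ℕ} (g : Matrix.SpecialLinearGroup (Fin d) ℤ)
    (v : Fin d → ℝ) : Fin d → ℝ :=
  ((g : Matrix (Fin d) (Fin d) ℤ).map (Int.cast : ℤ → ℝ)).mulVec v

lemma slActR_eq {d : ℕ} (g : Matrix.SpecialLinearGroup (Fin d) ℤ) :
    slActR g = Matrix.mulVecLin ((g : Matrix (Fin d) (Fin d) ℤ).map (Int.cast : ℤ → ℝ)) := rfl

lemma slActR_one {d : ℕ} (v : Fin d → ℝ) : slActR (1 : Matrix.SpecialLinearGroup (Fin d) ℤ) v = v := by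
  simp [slActR, Matrix.SpecialLinearGroup.coe_one, Matrix.map_one (Int.cast : ℤ → ℝ) Int.cast_zero Int.cast_one]

lemma slActR_mul {d : ℕ} (g g' : Matrix.SpecialLinearGroup (Fin d) ℤ) (v : Fin d → ℝ) :
    slActR (g * g') v = slActR g (slActR g' v) := by
  simp only [slActR, Matrix.SpecialLinearGroup.coe_mul]
  have hc : (Int.cast : ℤ → ℝ) = ⇑(Int.castRingHom ℝ) := rfl
  rw [hc, Matrix.map_mul, Matrix.mulVec_mulVec]

lemma slActR_sub {d : ℕ} (g : Matrix.SpecialLinearGroup (Fin d) ℤ) (v w : Fin d → ℝ) :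
    slActR g (v - w) = slActR g v - slActR g w := by
  simp [slActR_eq, map_sub]

lemma spanDiff_top (d : ℕ) (hd : 2 ≤ d) (G : Subgroup (Matrix.SpecialLinearGroup (Fin d) ℤ))
    (hirr : ∀ W : Submodule ℝ (Fin d → ℝ),
      (∀ g ∈ G, ∀ w ∈ W, slActR g w ∈ W) → W = ⊥ ∨ W = ⊤)
    (a : Fin d → ℝ) (ha : a ≠ 0) :
    Submodule.span ℝ {v | ∃ g ∈ G, v = slActR g a - a} = ⊤ := by
  set V := Submodule.span ℝ {v | ∃ g ∈ G, v = slActR g a - a} with hV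
  have hgen : ∀ g ∈ G, slActR g a - a ∈ V := fun g hg =>
    Submodule.subset_span ⟨g, hg, rfl⟩
  have hinv : ∀ g ∈ G, ∀ w ∈ V, slActR g w ∈ V := by
    intro g hg w hw
    induction hw using Submodule.span_induction with
    | mem x hx =>
      obtain ⟨g', hg', rfl⟩ := hx
      have : slActR g (slActR g' a - a) =
          (slActR (g * g') a - a) - (slActR g a - a) := by
        rw [slActR_sub, slActR_mul]; abel
      rw [this]
      exact V.sub_mem (hgen _ (G.mul_mem hg hg')) (hgen _ hg)
    | zero => simp [slActR_eq]
    | add x y hx hy ihx ihy => simpa [slActR_eq, map_add] using V.add_mem ihx ihy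
    | smul c x hx ih => simpa [slActR_eq, map_smul] using V.smul_mem c ih
  rcases hirr V hinv with hbot | htop
  · exfalso
    have hfix : ∀ g ∈ G, slActR g a = a := by
      intro g hg
      have := hgen g hg
      rw [hbot, Submodule.mem_bot] at this
      have := sub_eq_zero.mp this
      exact this
    set U : Submodule ℝ (Fin d → ℝ) := Submodule.span ℝ {a} with hU
    have hUinv : ∀ g ∈ G, ∀ w ∈ U, slActR g w ∈ U := by
      intro g hg w hw
      rw [hU, Submodule.mem_span_singleton] at hw
      obtain ⟨c, rfl⟩ := hw
      rw [slActR_eq, map_smul, ← slActR_eq, hfix g hg]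
      exact U.smul_mem c (Submodule.mem_span_singleton_self a)
    rcases hirr U hUinv with hUbot | hUtop
    · have := Submodule.mem_span_singleton_self (R := ℝ) a
      rw [← hU, hUbot, Submodule.mem_bot] at this
      exact ha this
    · have h1 : Module.finrank ℝ U = 1 := finrank_span_singleton ha
      rw [hUtop] at h1
      have : Module.finrank ℝ (⊤ : Submodule ℝ (Fin d → ℝ)) = d := by
        simp [finrank_top]
      omega
  · exact htop

/-- If `G₁ ≤ SL_{d₁}(ℤ)`, `G₂ ≤ SL_{d₂}(ℤ)` act irreducibly (`d₁, d₂ ≥ 2`),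
`a = (a₁, a₂)` has both components nonzero, and `W` is a subspace with
`(g₁, g₂)·a ∈ W + a` for all `(g₁, g₂) ∈ G₁ × G₂`, then `W` is everything. -/
theorem stmt11 (d₁ d₂ : ℕ) (h1 : 2 ≤ d₁) (h2 : 2 ≤ d₂)
    (G₁ : Subgroup (Matrix.SpecialLinearGroup (Fin d₁) ℤ))
    (G₂ : Subgroup (Matrix.SpecialLinearGroup (Fin d₂) ℤ))
    (hirr1 : ∀ W : Submodule ℝ (Fin d₁ → ℝ),
      (∀ g ∈ G₁, ∀ w ∈ W, slActR g w ∈ W) → W = ⊥ ∨ W = ⊤)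
    (hirr2 : ∀ W : Submodule ℝ (Fin d₂ → ℝ),
      (∀ g ∈ G₂, ∀ w ∈ W, slActR g w ∈ W) → W = ⊥ ∨ W = ⊤)
    (a₁ : Fin d₁ → ℝ) (a₂ : Fin d₂ → ℝ) (ha₁ : a₁ ≠ 0) (ha₂ : a₂ ≠ 0)
    (W : Submodule ℝ ((Fin d₁ → ℝ) × (Fin d₂ → ℝ)))
    (hW : ∀ g₁ ∈ G₁, ∀ g₂ ∈ G₂, (slActR g₁ a₁ - a₁, slActR g₂ a₂ - a₂) ∈ W) :
    W = ⊤ := by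
  have hspan1 := spanDiff_top d₁ h1 G₁ hirr1 a₁ ha₁
  have hspan2 := spanDiff_top d₂ h2 G₂ hirr2 a₂ ha₂
  have hleft : ∀ v : Fin d₁ → ℝ, (v, (0 : Fin d₂ → ℝ)) ∈ W := by
    have : Submodule.span ℝ {v | ∃ g ∈ G₁, v = slActR g a₁ - a₁} ≤
        W.comap (LinearMap.inl ℝ (Fin d₁ → ℝ) (Fin d₂ → ℝ)) := by
      rw [Submodule.span_le]
      rintro x ⟨g, hg, rfl⟩
      have := hW g hg 1 G₂.one_mem
      simpa [slActR_one] using this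
    rw [hspan1, top_le_iff] at this
    intro v
    have := this ▸ Submodule.mem_top (x := v)
    simpa using (Submodule.mem_comap.mp this)
  have hright : ∀ v : Fin d₂ → ℝ, ((0 : Fin d₁ → ℝ), v) ∈ W := by
    have : Submodule.span ℝ {v | ∃ g ∈ G₂, v = slActR g a₂ - a₂} ≤
        W.comap (LinearMap.inr ℝ (Fin d₁ → ℝ) (Fin d₂ → ℝ)) := by
      rw [Submodule.span_le]
      rintro x ⟨g, hg, rfl⟩
      have := hW 1 G₁.one_mem g hg
      simpa [slActR_one] using this
    rw [hspan2, top_le_iff] at this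
    intro v
    have := this ▸ Submodule.mem_top (x := v)
    simpa using (Submodule.mem_comap.mp this)
  rw [eq_top_iff]
  rintro ⟨v, w⟩ -
  have : (v, w) = ((v, 0) : _ × _) + (0, w) := by simp
  rw [this]
  exact W.add_mem (hleft v) (hright w)
end
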